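/- arXiv:1811.00305 — 3 statements merged into one kernel-verified Lean document; each statement's English description precedes it below -/
import Mathlib

section
/- Let α, β, k > 0 and ζ ≥ 0, and let v : ℝ → ℝ be continuously differentiable on [0,∞) with v(t) ≥ 0 for all t ≥ 0 and v'(t) ≤ -α·v(t) + (e^{-k t}·ζ + β)·√(v(t)) for all t ≥ 0. Then for all t ≥ 0, v(t) ≤ max(v(0), (ζ + β)²/α²). -/
/-- First inequality of the technical Gronwall-type Lemma A.1:
for a nonnegative continuously differentiable function `v` on `[0,∞)` satisfying
`v' t ≤ -α v t + (e^{-k t} ζ + β) √(v t)`, one has `v t ≤ max (v 0) ((ζ+β)²/α²)`. -/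
theorem gronwall_sqrt_max
    (α β k ζ : ℝ) (hα : 0 < α) (hβ : 0 < β) (hk : 0 < k) (hζ : 0 ≤ ζ)
    (v v' : ℝ → ℝ)
    (hderiv : ∀ t ∈ Set.Ici (0 : ℝ), HasDerivWithinAt v (v' t) (Set.Ici 0) t)
    (hcont : ContinuousOn v' (Set.Ici 0))
    (hnonneg : ∀ t ≥ (0 : ℝ), 0 ≤ v t)
    (hineq : ∀ t ≥ (0 : ℝ),
      v' t ≤ -α * v t + (Real.exp (-k * t) * ζ + β) * Real.sqrt (v t)) :
    ∀ t ≥ (0 : ℝ), v t ≤ max (v 0) ((ζ + β) ^ 2 / α ^ 2) := by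
  intro t ht
  set M : ℝ := max (v 0) ((ζ + β) ^ 2 / α ^ 2) with hM
  have hvcont : ContinuousOn v (Set.Icc 0 t) :=
    fun x hx => ((hderiv x hx.1).continuousWithinAt).mono (fun y hy => hy.1)
  have hMb : (ζ + β) ^ 2 / α ^ 2 ≤ M := le_max_right _ _
  have hζβ : 0 < ζ + β := by linarith
  -- For every ε > 0, v t ≤ M + ε using the fencing theorem with constant barrier.
  have key : ∀ ε > (0 : ℝ), v t ≤ M + ε := by
    intro ε hε
    have hMε : (ζ + β) ^ 2 / α ^ 2 < M + ε := by linarith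
    have := image_le_of_deriv_right_lt_deriv_boundary (f := v) (f' := v')
      (a := 0) (b := t) hvcont
      (fun x hx => (hderiv x hx.1).mono (Set.Ici_subset_Ici.2 hx.1))
      (B := fun _ => M + ε) (B' := fun _ => 0)
      (show v 0 ≤ M + ε from le_trans (le_max_left _ _) (by linarith))
      (fun x => hasDerivAt_const x (M + ε))
      ?_ (Set.right_mem_Icc.2 ht)
    · exact this
    · intro x hx hfx
      have hx0 : (0 : ℝ) ≤ x := hx.1
      have hvx : v x = M + ε := hfx
      have hvpos : 0 < v x := by
        rw [hvx]
        calc (0:ℝ) ≤ (ζ + β) ^ 2 / α ^ 2 := by positivity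
        _ < M + ε := hMε
      have hsq : Real.sqrt (v x) > (ζ + β) / α := by
        rw [show (ζ + β) / α = Real.sqrt ((ζ + β) ^ 2 / α ^ 2) by
          rw [Real.sqrt_div' _ (by positivity), Real.sqrt_sq hζβ.le,
            Real.sqrt_sq hα.le]]
        exact Real.sqrt_lt_sqrt (by positivity) (by rw [hvx]; exact hMε)
      have hexp : Real.exp (-k * x) ≤ 1 := by
        rw [Real.exp_le_one_iff]
        nlinarith
      have h1 : Real.exp (-k * x) * ζ + β ≤ ζ + β := by nlinarith [hexp]
      have hsqnn : 0 < Real.sqrt (v x) := Real.sqrt_pos.2 hvpos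
      have hsqsq : Real.sqrt (v x) * Real.sqrt (v x) = v x :=
        Real.mul_self_sqrt hvpos.le
      calc v' x ≤ -α * v x + (Real.exp (-k * x) * ζ + β) * Real.sqrt (v x) :=
            hineq x hx0
        _ ≤ -α * v x + (ζ + β) * Real.sqrt (v x) := by nlinarith
        _ = Real.sqrt (v x) * ((ζ + β) - α * Real.sqrt (v x)) := by
            linear_combination α * hsqsq
        _ < 0 := by
            apply mul_neg_of_pos_of_neg hsqnn
            have : ζ + β < α * Real.sqrt (v x) := by
              rw [gt_iff_lt, div_lt_iff₀ hα] at hsq; linarith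
            linarith
  exact le_of_forall_pos_le_add key
end

section
/- Let α, β, k > 0 and ζ ≥ 0 with 2k > α, and let v : ℝ → ℝ be continuously differentiable on [0,∞) with v(t) ≥ 0 for all t ≥ 0 and v'(t) ≤ -α·v(t) + (e^{-k t}·ζ + β)·√(v(t)) for all t ≥ 0. Then for all t ≥ 0, v(t) ≤ ( e^{-α t/2}·(√(v(0)) + ζ/(2k - α)) + β/α )². -/
/-!
The regularisation `w = √(v + ε²)` is differentiable even where `v` vanishes and satisfies the
linear inequality `w' ≤ -(α/2) w + (e^{-kt} ζ + β + α ε) / 2`. Multiplying by the integrating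
factor `e^{αt/2}` integrates this to `w t ≤ e^{-αt/2} (w 0 + ζ/(2k-α)) + β/α + ε`, where
`2k > α` keeps the contribution of the forcing term `e^{-kt} ζ` bounded. Letting `ε → 0` and
squaring gives the bound on `v`.
-/

open Real Set

theorem le_of_hasDerivWithinAt_le_neg_mul_add_exp {a b c k : ℝ} {f f' : ℝ → ℝ}
    (ha : 0 < a) (hb : 0 ≤ b) (hc : 0 ≤ c) (hak : a < k)
    (hf : ∀ t ∈ Ici (0 : ℝ), HasDerivWithinAt f (f' t) (Ici 0) t)
    (hle : ∀ t ≥ (0 : ℝ), f' t ≤ -a * f t + (exp (-k * t) * b + c)) :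
    ∀ t ≥ (0 : ℝ), f t ≤ exp (-a * t) * (f 0 + b / (k - a)) + c / a := by
  set B := b / (k - a)
  have hB : 0 ≤ B := div_nonneg hb (sub_pos.2 hak).le
  -- `-B e^{(a-k)t}` and `(c/a) e^{at}` are antiderivatives of `e^{at} e^{-kt} b` and `e^{at} c`.
  set F : ℝ → ℝ := fun t => exp (a * t) * (f t - c / a) + B * exp ((a - k) * t)
  have hF : ∀ t ∈ Ici (0 : ℝ), HasDerivWithinAt F
      (exp (a * t) * (f' t - (-a * f t + (exp (-k * t) * b + c)))) (Ici 0) t := by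
    intro t ht
    have hexp : ∀ r : ℝ, HasDerivAt (fun s => exp (r * s)) (exp (r * t) * r) t := fun r => by
      simpa using ((hasDerivAt_id t).const_mul r).exp
    refine (((hexp a).hasDerivWithinAt.mul ((hf t ht).sub_const (c / a))).add
      ((hexp (a - k)).hasDerivWithinAt.const_mul B)).congr_deriv ?_
    have hsplit : exp ((a - k) * t) = exp (a * t) * exp (-k * t) := by
      rw [← exp_add]; ring_nf
    have hBk : B * (k - a) = b := div_mul_cancel₀ b (sub_pos.2 hak).ne'
    have hca : a * (c / a) = c := mul_div_cancel₀ c ha.ne'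
    rw [hsplit]
    linear_combination -(exp (a * t) * exp (-k * t)) * hBk - exp (a * t) * hca
  have hanti : AntitoneOn F (Ici 0) := by
    refine antitoneOn_of_hasDerivWithinAt_nonpos (convex_Ici 0)
      (f' := fun t => exp (a * t) * (f' t - (-a * f t + (exp (-k * t) * b + c))))
      (fun t ht => (hF t ht).continuousWithinAt) (fun t ht => ?_) (fun t ht => ?_)
    · rw [interior_Ici] at ht ⊢
      exact (hF t (Ioi_subset_Ici_self ht)).mono Ioi_subset_Ici_self
    · rw [interior_Ici] at ht
      exact mul_nonpos_of_nonneg_of_nonpos (exp_pos _).le (sub_nonpos.2 (hle t (le_of_lt ht)))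
  intro t ht
  have hFt : F t ≤ F 0 := hanti self_mem_Ici ht ht
  simp only [F, mul_zero, exp_zero, one_mul, mul_one] at hFt
  have hinv : exp (-a * t) * exp (a * t) = 1 := by rw [← exp_add]; simp
  have hca : 0 ≤ exp (-a * t) * (c / a) := mul_nonneg (exp_pos _).le (div_nonneg hc ha.le)
  have hBt : 0 ≤ B * exp ((a - k) * t) := mul_nonneg hB (exp_pos _).le
  calc f t = exp (-a * t) * (exp (a * t) * (f t - c / a)) + c / a := by
        rw [← mul_assoc, hinv]; ring
    _ ≤ exp (-a * t) * (f 0 - c / a + B) + c / a := by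
        gcongr
        linarith
    _ ≤ exp (-a * t) * (f 0 + B) + c / a := by nlinarith

theorem div_two_sqrt_add_sq_le {α ε g v v' : ℝ} (hα : 0 ≤ α) (hε : 0 < ε) (hg : 0 ≤ g)
    (hv : 0 ≤ v) (h : v' ≤ -α * v + g * √v) :
    v' / (2 * √(v + ε ^ 2)) ≤ -(α / 2) * √(v + ε ^ 2) + (g + α * ε) / 2 := by
  set W := √(v + ε ^ 2)
  have hW : 0 < W := sqrt_pos.2 (by positivity)
  have hW2 : W ^ 2 = v + ε ^ 2 := sq_sqrt (by positivity)
  have hεW : ε ≤ W := le_sqrt_of_sq_le (by linarith)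
  have hvW : √v ≤ W := sqrt_le_sqrt (le_add_of_nonneg_right (sq_nonneg ε))
  have hbound : v' ≤ (-α * W + α * ε + g) * W := by
    nlinarith [mul_le_mul_of_nonneg_left hvW hg,
      mul_le_mul_of_nonneg_left hεW (mul_nonneg hα hε.le)]
  rw [div_le_iff₀ (by positivity)]
  linarith

theorem sqrt_add_sq_le_sqrt_add {x ε : ℝ} (hx : 0 ≤ x) (hε : 0 ≤ ε) : √(x + ε ^ 2) ≤ √x + ε := by
  rw [sqrt_le_left (by positivity)]
  nlinarith [sq_sqrt hx, sqrt_nonneg x]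

theorem sqrt_le_of_hasDerivWithinAt_le_neg_mul_add_mul_sqrt {α β k ζ : ℝ} {v v' : ℝ → ℝ}
    (hα : 0 < α) (hβ : 0 ≤ β) (hζ : 0 ≤ ζ) (h2k : α < 2 * k)
    (hderiv : ∀ t ∈ Ici (0 : ℝ), HasDerivWithinAt v (v' t) (Ici 0) t)
    (hnonneg : ∀ t ≥ (0 : ℝ), 0 ≤ v t)
    (hineq : ∀ t ≥ (0 : ℝ), v' t ≤ -α * v t + (exp (-k * t) * ζ + β) * √(v t)) :
    ∀ t ≥ (0 : ℝ), √(v t) ≤ exp (-α * t / 2) * (√(v 0) + ζ / (2 * k - α)) + β / α := by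
  intro t ht
  have hε_bound : ∀ ε > 0,
      √(v t) ≤ exp (-α * t / 2) * (√(v 0) + ζ / (2 * k - α)) + β / α + 2 * ε := by
    intro ε hε
    have hw := le_of_hasDerivWithinAt_le_neg_mul_add_exp (f := fun s => √(v s + ε ^ 2))
      (a := α / 2) (b := ζ / 2) (c := (β + α * ε) / 2) (k := k) (by positivity) (by positivity)
      (by positivity) (by linarith)
      (fun s hs => ((hderiv s hs).add_const _).sqrt
        (add_pos_of_nonneg_of_pos (hnonneg s hs) (pow_pos hε 2)).ne')
      (fun s hs => by
        have := div_two_sqrt_add_sq_le hα.le hε (by positivity) (hnonneg s hs) (hineq s hs)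
        linarith) t ht
    have hb : ζ / 2 / (k - α / 2) = ζ / (2 * k - α) := by
      rw [div_div, mul_sub, mul_div_cancel₀ α two_ne_zero]
    have hc : (β + α * ε) / 2 / (α / 2) = β / α + ε := by field_simp
    have he : exp (-(α / 2) * t) = exp (-α * t / 2) := by ring_nf
    simp only [hb, hc, he] at hw
    have he1 : exp (-α * t / 2) ≤ 1 := exp_le_one_iff.2 (by nlinarith)
    have hv0 := sqrt_add_sq_le_sqrt_add (hnonneg 0 le_rfl) hε.le
    have hvt : √(v t) ≤ √(v t + ε ^ 2) := sqrt_le_sqrt (le_add_of_nonneg_right (sq_nonneg ε))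
    nlinarith [mul_le_mul_of_nonneg_left hv0 (exp_pos (-α * t / 2)).le,
      mul_le_of_le_one_left hε.le he1]
  refine le_of_forall_pos_le_add fun δ hδ => ?_
  simpa [mul_div_cancel₀] using hε_bound (δ / 2) (half_pos hδ)

theorem gronwall_sqrt_exp_general
    (α β k ζ : ℝ) (hα : 0 < α) (hβ : 0 < β) (hζ : 0 ≤ ζ)
    (h2k : α < 2 * k)
    (v v' : ℝ → ℝ)
    (hderiv : ∀ t ∈ Set.Ici (0 : ℝ), HasDerivWithinAt v (v' t) (Set.Ici 0) t)
    (hnonneg : ∀ t ≥ (0 : ℝ), 0 ≤ v t)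
    (hineq : ∀ t ≥ (0 : ℝ),
      v' t ≤ -α * v t + (Real.exp (-k * t) * ζ + β) * Real.sqrt (v t)) :
    ∀ t ≥ (0 : ℝ),
      v t ≤ (Real.exp (-α * t / 2) * (Real.sqrt (v 0) + ζ / (2 * k - α)) + β / α) ^ 2 := by
  intro t ht
  have hrhs : 0 ≤ exp (-α * t / 2) * (√(v 0) + ζ / (2 * k - α)) + β / α := by
    have : 0 ≤ ζ / (2 * k - α) := div_nonneg hζ (by linarith)
    positivity
  exact (sqrt_le_left hrhs).1 <|
    sqrt_le_of_hasDerivWithinAt_le_neg_mul_add_mul_sqrt hα hβ.le hζ h2k hderiv hnonneg hineq t ht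

/-- Second inequality of the technical Gronwall-type Lemma A.1, in the case `2k > α`:
for a nonnegative continuously differentiable function `v` on `[0,∞)` satisfying
`v' t ≤ -α v t + (e^{-k t} ζ + β) √(v t)`, one has
`v t ≤ (e^{-α t/2} (√(v 0) + ζ/(2k-α)) + β/α)²`. -/
theorem gronwall_sqrt_exp
    (α β k ζ : ℝ) (hα : 0 < α) (hβ : 0 < β) (hk : 0 < k) (hζ : 0 ≤ ζ)
    (h2k : α < 2 * k)
    (v v' : ℝ → ℝ)
    (hderiv : ∀ t ∈ Set.Ici (0 : ℝ), HasDerivWithinAt v (v' t) (Set.Ici 0) t)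
    (hcont : ContinuousOn v' (Set.Ici 0))
    (hnonneg : ∀ t ≥ (0 : ℝ), 0 ≤ v t)
    (hineq : ∀ t ≥ (0 : ℝ),
      v' t ≤ -α * v t + (Real.exp (-k * t) * ζ + β) * Real.sqrt (v t)) :
    ∀ t ≥ (0 : ℝ),
      v t ≤ (Real.exp (-α * t / 2) * (Real.sqrt (v 0) + ζ / (2 * k - α)) + β / α) ^ 2 :=
  gronwall_sqrt_exp_general α β k ζ hα hβ hζ h2k v v' hderiv hnonneg hineq
end

section
/- Let α, β > 0 and let v : ℝ → ℝ be continuously differentiable on [0,∞) with v(t) ≥ 0 for all t ≥ 0 and v'(t) ≤ -α·v(t) + β·√(v(t)) for all t ≥ 0. Then for all t ≥ 0, v(t) ≤ ( e^{-α t/2}·√(v(0)) + β/α )². -/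
/-!
For `c > β/α` the function `B(s) = (e^{-αs/2} √(v 0) + c)²` is a strict supersolution: writing
`u = √B`, one has `B' = -αu² + αcu`, while wherever `v` touches `B` the hypothesis gives
`v' ≤ -αu² + βu < B'`. Hence `v` can never cross `B`, and letting `c ↓ β/α` gives the bound.
-/

open Real Set Filter Topology

lemma hasDerivAt_sq_exp_mul_add (α a c x : ℝ) :
    HasDerivAt (fun s => (exp (-α * s / 2) * a + c) ^ 2)
      (-α * (exp (-α * x / 2) * a + c) ^ 2 + α * c * (exp (-α * x / 2) * a + c)) x := by
  have hlin : HasDerivAt (fun s : ℝ => -α * s / 2) (-α / 2) x := by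
    simpa using ((hasDerivAt_id x).const_mul (-α)).div_const 2
  have hinner : HasDerivAt (fun s => exp (-α * s / 2) * a + c)
      (exp (-α * x / 2) * (-α / 2) * a) x := (hlin.exp.mul_const a).add_const c
  exact (hinner.pow 2).congr_deriv (by push_cast; ring)

lemma le_sq_exp_mul_add_of_deriv_le {α β a c : ℝ} (ha : 0 ≤ a) (hc : 0 < c)
    (hβc : β < α * c) {v v' : ℝ → ℝ}
    (hderiv : ∀ t ∈ Ici (0 : ℝ), HasDerivWithinAt v (v' t) (Ici 0) t)
    (hineq : ∀ t ≥ (0 : ℝ), v' t ≤ -α * v t + β * √(v t))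
    (hv₀ : v 0 ≤ (a + c) ^ 2) {t : ℝ} (ht : 0 ≤ t) :
    v t ≤ (exp (-α * t / 2) * a + c) ^ 2 := by
  refine image_le_of_deriv_right_lt_deriv_boundary
    (fun x hx => (hderiv x hx.1).continuousWithinAt.mono Icc_subset_Ici_self)
    (fun x hx => (hderiv x hx.1).mono (Ici_subset_Ici.2 hx.1))
    (by simpa using hv₀) (hasDerivAt_sq_exp_mul_add α a c) ?_ ⟨ht, le_rfl⟩
  intro x hx htouch
  set u := exp (-α * x / 2) * a + c
  have hu : 0 < u := by positivity
  have hsqrt : √(v x) = u := by rw [htouch, sqrt_sq hu.le]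
  calc v' x ≤ -α * u ^ 2 + β * u := (hineq x hx.1).trans_eq (by rw [hsqrt, htouch])
    _ < -α * u ^ 2 + α * c * u := by gcongr

theorem gronwall_sqrt_exp_zero_general
    (α β : ℝ) (hα : 0 < α) (hβ : 0 < β)
    (v v' : ℝ → ℝ)
    (hderiv : ∀ t ∈ Set.Ici (0 : ℝ), HasDerivWithinAt v (v' t) (Set.Ici 0) t)
    (hnonneg : ∀ t ≥ (0 : ℝ), 0 ≤ v t)
    (hineq : ∀ t ≥ (0 : ℝ), v' t ≤ -α * v t + β * Real.sqrt (v t)) :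
    ∀ t ≥ (0 : ℝ),
      v t ≤ (Real.exp (-α * t / 2) * Real.sqrt (v 0) + β / α) ^ 2 := by
  intro t ht
  have hbound : ∀ c > β / α, v t ≤ (exp (-α * t / 2) * √(v 0) + c) ^ 2 := by
    intro c hc
    have hc₀ : 0 < c := (div_pos hβ hα).trans hc
    have hv₀ : v 0 ≤ (√(v 0) + c) ^ 2 :=
      calc v 0 = √(v 0) ^ 2 := (sq_sqrt (hnonneg 0 le_rfl)).symm
        _ ≤ (√(v 0) + c) ^ 2 := by gcongr; linarith
    exact le_sq_exp_mul_add_of_deriv_le (sqrt_nonneg _) hc₀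
      ((div_lt_iff₀' hα).1 hc) hderiv hineq hv₀ ht
  have hlim : Tendsto (fun c => (exp (-α * t / 2) * √(v 0) + c) ^ 2) (𝓝[>] (β / α))
      (𝓝 ((exp (-α * t / 2) * √(v 0) + β / α) ^ 2)) :=
    ((continuous_const.add continuous_id).pow 2).continuousWithinAt
  exact ge_of_tendsto hlim (eventually_nhdsWithin_of_forall hbound)

/-- Second inequality of the technical Gronwall-type Lemma A.1 specialized to `ζ = 0`:
for a nonnegative continuously differentiable function `v` on `[0,∞)` satisfying
`v' t ≤ -α v t + β √(v t)`, one has `v t ≤ (e^{-α t/2} √(v 0) + β/α)²`. -/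
theorem gronwall_sqrt_exp_zero
    (α β : ℝ) (hα : 0 < α) (hβ : 0 < β)
    (v v' : ℝ → ℝ)
    (hderiv : ∀ t ∈ Set.Ici (0 : ℝ), HasDerivWithinAt v (v' t) (Set.Ici 0) t)
    (hcont : ContinuousOn v' (Set.Ici 0))
    (hnonneg : ∀ t ≥ (0 : ℝ), 0 ≤ v t)
    (hineq : ∀ t ≥ (0 : ℝ), v' t ≤ -α * v t + β * Real.sqrt (v t)) :
    ∀ t ≥ (0 : ℝ),
      v t ≤ (Real.exp (-α * t / 2) * Real.sqrt (v 0) + β / α) ^ 2 :=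
  gronwall_sqrt_exp_zero_general α β hα hβ v v' hderiv hnonneg hineq
end
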